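/- arXiv:1410.7196 — 5 statements merged into one kernel-verified Lean document; each statement's English description precedes it below -/
import Mathlib

section
/- Let x_{k-2} < x_{k-1} < x_k be real numbers satisfying the stretching condition x_k - 2x_{k-1} + x_{k-2} ≥ 0. Then D_{2k-1}(t) > D_{2k}(t) for every t in the open interval (x_{k-2}, x_{k-1}). -/
/-- The non-normalized C¹ cubic B-spline `D_{2k-1}` on the knot triple
`p = x_{k-2} < q = x_{k-1} < r = x_k` (each of multiplicity two),
extended by zero outside `[p, r]`. -/
noncomputable def Dodd (p q r t : ℝ) : ℝ :=
  if p ≤ t ∧ t ≤ r then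
    (1 / ((r - q) ^ 2 * ((r - q) + (q - p)) ^ 2)) * (max (r - t) 0) ^ 3
      + ((2 * (r - q) - (q - p)) / ((q - p) ^ 3 * (r - q) ^ 2)) * (max (q - t) 0) ^ 3
      + (-3 / ((q - p) ^ 2 * (r - q))) * (max (q - t) 0) ^ 2
  else 0

/-- The non-normalized C¹ cubic B-spline `D_{2k}` on the knot triple
`p = x_{k-2} < q = x_{k-1} < r = x_k`, extended by zero outside `[p, r]`. -/
noncomputable def Deven (p q r t : ℝ) : ℝ :=
  if p ≤ t ∧ t ≤ r then
    ((-3 * (r - q) - 2 * (q - p)) / (((r - q) + (q - p)) ^ 2 * (r - q) ^ 3)) * (max (r - t) 0) ^ 3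
      + (3 / (((r - q) + (q - p)) * (r - q) ^ 2)) * (max (r - t) 0) ^ 2
      + ((2 * (q - p) - (r - q)) / ((q - p) ^ 2 * (r - q) ^ 3)) * (max (q - t) 0) ^ 3
      + (3 / ((q - p) * (r - q) ^ 2)) * (max (q - t) 0) ^ 2
  else 0

lemma spline_aux (a b v : ℝ) (ha : 0 < a) (hb : 0 < b) (hv : 0 < v)
    (hva : v < a) (hab : a ≤ b) :
    ((-3 * b - 2 * a) / ((b + a) ^ 2 * b ^ 3)) * (b + v) ^ 3
      + (3 / ((b + a) * b ^ 2)) * (b + v) ^ 2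
      + ((2 * a - b) / (a ^ 2 * b ^ 3)) * v ^ 3
      + (3 / (a * b ^ 2)) * v ^ 2
    < (1 / (b ^ 2 * (b + a) ^ 2)) * (b + v) ^ 3
      + ((2 * b - a) / (a ^ 3 * b ^ 2)) * v ^ 3
      + (-3 / (a ^ 2 * b)) * v ^ 2 := by
  rw [← sub_pos]
  have key :
      ((1 / (b ^ 2 * (b + a) ^ 2)) * (b + v) ^ 3
        + ((2 * b - a) / (a ^ 3 * b ^ 2)) * v ^ 3
        + (-3 / (a ^ 2 * b)) * v ^ 2)
      - (((-3 * b - 2 * a) / ((b + a) ^ 2 * b ^ 3)) * (b + v) ^ 3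
        + (3 / ((b + a) * b ^ 2)) * (b + v) ^ 2
        + ((2 * a - b) / (a ^ 2 * b ^ 3)) * v ^ 3
        + (3 / (a * b ^ 2)) * v ^ 2)
      = ((a - v) ^ 2 * (2 * (b + 2 * a) * v + a * (b - a))) / (a ^ 3 * (b + a) ^ 2) := by
    have h1 : a ≠ 0 := ne_of_gt ha
    have h2 : b ≠ 0 := ne_of_gt hb
    have h3 : b + a ≠ 0 := by positivity
    field_simp
    ring
  rw [key]
  apply div_pos
  · have h4 : (0:ℝ) < a - v := by linarith
    have h5 : 0 < 2 * (b + 2 * a) * v + a * (b - a) := by nlinarith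
    positivity
  · positivity

/-- Lemma 1 of the paper: if `x_{k-2} < x_{k-1} < x_k` satisfy the stretching condition
`x_k - 2 x_{k-1} + x_{k-2} ≥ 0`, then `D_{2k-1}(t) > D_{2k}(t)` on `(x_{k-2}, x_{k-1})`. -/
theorem stmt0 (p q r : ℝ) (hpq : p < q) (hqr : q < r)
    (hstretch : r - 2 * q + p ≥ 0) :
    ∀ t ∈ Set.Ioo p q, Deven p q r t < Dodd p q r t := by
  intro t ht
  obtain ⟨htp, htq⟩ := ht
  have h1 : (0:ℝ) < q - p := by linarith
  have h3 : (0:ℝ) < q - t := by linarith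
  have h5 : (0:ℝ) < r - t := by linarith
  have hcond : p ≤ t ∧ t ≤ r := ⟨le_of_lt htp, by linarith⟩
  rw [Dodd, Deven, if_pos hcond, if_pos hcond,
    max_eq_left h5.le, max_eq_left h3.le]
  have hrt : r - t = (r - q) + (q - t) := by ring
  rw [hrt]
  exact spline_aux (q - p) (r - q) (q - t) h1 (by linarith) h3 (by linarith) (by linarith)
end

section
/- Let x_{k-2} < x_{k-1} < x_k be real numbers. For every t ∈ [x_{k-2}, x_{k-1}], writing u = (t - x_{k-2})/(x_{k-1} - x_{k-2}), one has the Bernstein–Bézier representation D_{2k-1}(t) - D_{2k}(t) = (3 u^2 (1-u)) · 1/(x_k - x_{k-2}) + u^3 · (x_k - 2 x_{k-1} + x_{k-2})/(x_k - x_{k-2})^2; that is, the cubic Bézier control ordinates of D_{2k-1} - D_{2k} over [x_{k-2}, x_{k-1}] are (q_0, q_1, q_2, q_3) = (0, 0, 1/(x_k - x_{k-2}), (x_k - 2 x_{k-1} + x_{k-2})/(x_k - x_{k-2})^2). -/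
lemma key (a b s : ℝ) (ha : a ≠ 0) (hb : b ≠ 0) (hab : a + b ≠ 0) :
    (1 / (b ^ 2 * (b + a) ^ 2)) * (a + b - s) ^ 3
      + ((2 * b - a) / (a ^ 3 * b ^ 2)) * (a - s) ^ 3
      + (-3 / (a ^ 2 * b)) * (a - s) ^ 2
      - (((-3 * b - 2 * a) / ((b + a) ^ 2 * b ^ 3)) * (a + b - s) ^ 3
        + (3 / ((b + a) * b ^ 2)) * (a + b - s) ^ 2
        + ((2 * a - b) / (a ^ 2 * b ^ 3)) * (a - s) ^ 3
        + (3 / (a * b ^ 2)) * (a - s) ^ 2) =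
    3 * (s / a) ^ 2 * (1 - s / a) * (1 / (a + b))
      + (s / a) ^ 3 * ((b - a) / (a + b) ^ 2) := by
  have hba : b + a ≠ 0 := by rwa [add_comm]
  field_simp
  ring

/-- The Bernstein–Bézier representation of `D_{2k-1} - D_{2k}` over `[x_{k-2}, x_{k-1}]`:
with `u = (t - x_{k-2})/(x_{k-1} - x_{k-2})`,
`D_{2k-1}(t) - D_{2k}(t) = 3u²(1-u) · 1/(x_k - x_{k-2}) + u³ · (x_k - 2x_{k-1} + x_{k-2})/(x_k - x_{k-2})²`,
i.e. the Bézier control ordinates are `(0, 0, 1/(x_k - x_{k-2}), (x_k - 2x_{k-1} + x_{k-2})/(x_k - x_{k-2})²)`. -/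
theorem stmt1 (p q r : ℝ) (hpq : p < q) (hqr : q < r) :
    ∀ t ∈ Set.Icc p q,
      Dodd p q r t - Deven p q r t =
        3 * ((t - p) / (q - p)) ^ 2 * (1 - (t - p) / (q - p)) * (1 / (r - p))
          + ((t - p) / (q - p)) ^ 3 * ((r - 2 * q + p) / (r - p) ^ 2) := by
  intro t ht
  obtain ⟨htp, htq⟩ := ht
  have htr : t ≤ r := htq.trans hqr.le
  have h1 : max (r - t) 0 = r - t := max_eq_left (by linarith)
  have h2 : max (q - t) 0 = q - t := max_eq_left (by linarith)
  have hqp : q - p ≠ 0 := by linarith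
  have hrq : r - q ≠ 0 := by linarith
  have hrp : r - p ≠ 0 := by linarith
  have hrp2 : (r - q) + (q - p) ≠ 0 := by linarith
  rw [Dodd, Deven, if_pos ⟨htp, htr⟩, if_pos ⟨htp, htr⟩, h1, h2]
  have e1 : r - t = (q - p) + (r - q) - (t - p) := by ring
  have e2 : q - t = (q - p) - (t - p) := by ring
  have e3 : r - p = (q - p) + (r - q) := by ring
  have e4 : r - 2 * q + p = (r - q) - (q - p) := by ring
  rw [e1, e2, e4, e3]
  exact key (q - p) (r - q) (t - p) hqp hrq (by linarith)
end

section
/- Let x_{k-2} < x_{k-1} < x_k be real numbers. Then the integrals of the B-splines over their support satisfy ∫_{x_{k-2}}^{x_k} D_{2k-1}(t) dt = 1/4 and ∫_{x_{k-2}}^{x_k} D_{2k}(t) dt = 1/4. -/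
lemma int3 (a b c : ℝ) : (∫ t in a..b, (c - t)^3) = ((c-a)^4 - (c-b)^4)/4 := by
  rw [intervalIntegral.integral_comp_sub_left (fun x => x^3) c, integral_pow]
  norm_num

lemma int2 (a b c : ℝ) : (∫ t in a..b, (c - t)^2) = ((c-a)^3 - (c-b)^3)/3 := by
  rw [intervalIntegral.integral_comp_sub_left (fun x => x^2) c, integral_pow]
  norm_num

lemma polyInt (a b c d A B C D : ℝ) :
    (∫ t in a..b, (A*(c-t)^3 + B*(c-t)^2 + C*(d-t)^3 + D*(d-t)^2)) =
      A*((c-a)^4-(c-b)^4)/4 + B*((c-a)^3-(c-b)^3)/3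
        + C*((d-a)^4-(d-b)^4)/4 + D*((d-a)^3-(d-b)^3)/3 := by
  have I : ∀ f : ℝ → ℝ, Continuous f → IntervalIntegrable f MeasureTheory.volume a b :=
    fun f hf => hf.intervalIntegrable a b
  rw [intervalIntegral.integral_add (I _ (by continuity)) (I _ (by continuity)),
      intervalIntegral.integral_add (I _ (by continuity)) (I _ (by continuity)),
      intervalIntegral.integral_add (I _ (by continuity)) (I _ (by continuity))]
  simp only [intervalIntegral.integral_const_mul]
  rw [int3, int3, int2, int2]
  ring

lemma splineInt (p q r A B C D : ℝ) (hpq : p < q) (hqr : q < r) :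
    (∫ t in p..r, (A*(max (r-t) 0)^3 + B*(max (r-t) 0)^2
        + C*(max (q-t) 0)^3 + D*(max (q-t) 0)^2)) =
      A*(r-p)^4/4 + B*(r-p)^3/3 + C*(q-p)^4/4 + D*(q-p)^3/3 := by
  have hc : Continuous (fun t : ℝ => A*(max (r-t) 0)^3 + B*(max (r-t) 0)^2
      + C*(max (q-t) 0)^3 + D*(max (q-t) 0)^2) := by continuity
  rw [← intervalIntegral.integral_add_adjacent_intervals
      (hc.intervalIntegrable p q) (hc.intervalIntegrable q r)]
  have e1 : (∫ t in p..q, (A*(max (r-t) 0)^3 + B*(max (r-t) 0)^2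
      + C*(max (q-t) 0)^3 + D*(max (q-t) 0)^2)) =
      ∫ t in p..q, (A*(r-t)^3 + B*(r-t)^2 + C*(q-t)^3 + D*(q-t)^2) := by
    apply intervalIntegral.integral_congr
    intro t ht
    rw [Set.uIcc_of_le hpq.le] at ht
    dsimp only
    rw [max_eq_left (by linarith [ht.1, ht.2] : (0:ℝ) ≤ r - t),
        max_eq_left (by linarith [ht.1, ht.2] : (0:ℝ) ≤ q - t)]
  have e2 : (∫ t in q..r, (A*(max (r-t) 0)^3 + B*(max (r-t) 0)^2
      + C*(max (q-t) 0)^3 + D*(max (q-t) 0)^2)) =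
      ∫ t in q..r, (A*(r-t)^3 + B*(r-t)^2 + 0*(q-t)^3 + 0*(q-t)^2) := by
    apply intervalIntegral.integral_congr
    intro t ht
    rw [Set.uIcc_of_le hqr.le] at ht
    dsimp only
    rw [max_eq_left (by linarith [ht.1, ht.2] : (0:ℝ) ≤ r - t),
        max_eq_right (by linarith [ht.1, ht.2] : q - t ≤ 0)]
    ring
  rw [e1, e2, polyInt, polyInt]
  ring

set_option maxHeartbeats 2000000 in
/-- The integrals of the B-splines `D_{2k-1}` and `D_{2k}` over their support
`[x_{k-2}, x_k]` both equal `1/4`. -/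
theorem stmt2 (p q r : ℝ) (hpq : p < q) (hqr : q < r) :
    (∫ t in p..r, Dodd p q r t) = 1 / 4 ∧ (∫ t in p..r, Deven p q r t) = 1 / 4 := by
  have hpr : p ≤ r := (hpq.trans hqr).le
  have h1 : q - p ≠ 0 := sub_ne_zero.mpr hpq.ne'
  have h2 : r - q ≠ 0 := sub_ne_zero.mpr hqr.ne'
  have h3 : r - q + (q - p) ≠ 0 := by intro h; apply h2; linarith
  constructor
  · have e : (∫ t in p..r, Dodd p q r t) =
        ∫ t in p..r, ((1 / ((r - q) ^ 2 * ((r - q) + (q - p)) ^ 2)) * (max (r-t) 0)^3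
          + 0 * (max (r-t) 0)^2
          + ((2 * (r - q) - (q - p)) / ((q - p) ^ 3 * (r - q) ^ 2)) * (max (q-t) 0)^3
          + (-3 / ((q - p) ^ 2 * (r - q))) * (max (q-t) 0)^2) := by
      apply intervalIntegral.integral_congr
      intro t ht
      rw [Set.uIcc_of_le hpr] at ht
      rw [Dodd, if_pos ⟨ht.1, ht.2⟩]
      ring
    rw [e, splineInt _ _ _ _ _ _ _ hpq hqr,
        show r - p = (r - q) + (q - p) by ring]
    set u := q - p
    set v := r - q
    field_simp
    ring
  · have e : (∫ t in p..r, Deven p q r t) =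
        ∫ t in p..r, (((-3 * (r - q) - 2 * (q - p)) / (((r - q) + (q - p)) ^ 2 * (r - q) ^ 3)) * (max (r-t) 0)^3
          + (3 / (((r - q) + (q - p)) * (r - q) ^ 2)) * (max (r-t) 0)^2
          + ((2 * (q - p) - (r - q)) / ((q - p) ^ 2 * (r - q) ^ 3)) * (max (q-t) 0)^3
          + (3 / ((q - p) * (r - q) ^ 2)) * (max (q-t) 0)^2) := by
      apply intervalIntegral.integral_congr
      intro t ht
      rw [Set.uIcc_of_le hpr] at ht
      rw [Deven, if_pos ⟨ht.1, ht.2⟩]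
    rw [e, splineInt _ _ _ _ _ _ _ hpq hqr,
        show r - p = (r - q) + (q - p) by ring]
    set u := q - p
    set v := r - q
    field_simp
    ring
end

section
/- Let x_{k-2} < x_{k-1} < x_k be real numbers. Then (i) D_{2k-1}(t) > 0 and D_{2k}(t) > 0 for every t ∈ (x_{k-2}, x_k); and (ii) the cubic expressions defining D_{2k-1} and D_{2k} on [x_{k-2}, x_k], namely P(t) = a_k (x_k - t)^3 + b_k (x_{k-1} - t)^3 + c_k (x_{k-1} - t)^2 and R(t) = α_k (x_k - t)^3 + β_k (x_k - t)^2 + γ_k (x_{k-1} - t)^3 + η_k (x_{k-1} - t)^2, satisfy P(x_{k-2}) = P'(x_{k-2}) = 0 and R(x_{k-2}) = R'(x_{k-2}) = 0, so that the extensions of D_{2k-1} and D_{2k} by zero outside [x_{k-2}, x_k] are continuously differentiable on ℝ. -/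
lemma hasDerivAt_maxsq (x : ℝ) : HasDerivAt (fun y : ℝ => max y 0 ^ 2) (2 * max x 0) x := by
  rcases lt_trichotomy x 0 with h | h | h
  · have hev : (fun y : ℝ => max y 0 ^ 2) =ᶠ[nhds x] fun _ => (0:ℝ) := by
      filter_upwards [Iio_mem_nhds h] with y hy
      simp [max_eq_right (le_of_lt (Set.mem_Iio.mp hy))]
    have h0 : HasDerivAt (fun _ : ℝ => (0:ℝ)) 0 x := hasDerivAt_const x 0
    simpa [max_eq_right h.le] using h0.congr_of_eventuallyEq hev
  · subst h
    rw [hasDerivAt_iff_isLittleO, Asymptotics.isLittleO_iff]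
    intro c hc
    filter_upwards [Metric.ball_mem_nhds 0 hc] with y hy
    rw [Metric.mem_ball, Real.dist_eq, sub_zero] at hy
    have h1 : max y 0 ≤ |y| := max_le (le_abs_self y) (abs_nonneg y)
    have h2 : (0:ℝ) ≤ max y 0 := le_max_right _ _
    have : |max y 0 ^ 2| = max y 0 ^ 2 := abs_of_nonneg (by positivity)
    simp only [max_self, sub_zero, smul_eq_mul, Real.norm_eq_abs]
    norm_num
    nlinarith [abs_nonneg y]
  · have hev : (fun y : ℝ => max y 0 ^ 2) =ᶠ[nhds x] fun y => y ^ 2 := by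
      filter_upwards [Ioi_mem_nhds h] with y hy
      simp [max_eq_left (le_of_lt (Set.mem_Ioi.mp hy))]
    have h0 : HasDerivAt (fun y : ℝ => y ^ 2) (2 * x) x := by
      simpa using hasDerivAt_pow 2 x
    simpa [max_eq_left h.le] using h0.congr_of_eventuallyEq hev

lemma hasDerivAt_maxcb (x : ℝ) : HasDerivAt (fun y : ℝ => max y 0 ^ 3) (3 * max x 0 ^ 2) x := by
  rcases lt_trichotomy x 0 with h | h | h
  · have hev : (fun y : ℝ => max y 0 ^ 3) =ᶠ[nhds x] fun _ => (0:ℝ) := by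
      filter_upwards [Iio_mem_nhds h] with y hy
      simp [max_eq_right (le_of_lt (Set.mem_Iio.mp hy))]
    have h0 : HasDerivAt (fun _ : ℝ => (0:ℝ)) 0 x := hasDerivAt_const x 0
    simpa [max_eq_right h.le] using h0.congr_of_eventuallyEq hev
  · subst h
    rw [hasDerivAt_iff_isLittleO, Asymptotics.isLittleO_iff]
    intro c hc
    have hc' : (0:ℝ) < min c 1 := lt_min hc one_pos
    filter_upwards [Metric.ball_mem_nhds 0 hc'] with y hy
    rw [Metric.mem_ball, Real.dist_eq, sub_zero] at hy
    have hyc : |y| < c := lt_of_lt_of_le hy (min_le_left _ _)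
    have hy1 : |y| < 1 := lt_of_lt_of_le hy (min_le_right _ _)
    have h1 : max y 0 ≤ |y| := max_le (le_abs_self y) (abs_nonneg y)
    have h2 : (0:ℝ) ≤ max y 0 := le_max_right _ _
    have h3 : |max y 0 ^ 3| = max y 0 ^ 3 := abs_of_nonneg (by positivity)
    simp only [max_self, sub_zero, smul_eq_mul, Real.norm_eq_abs]
    norm_num
    rw [abs_of_nonneg h2]
    nlinarith [abs_nonneg y, sq_nonneg |y|, pow_le_pow_left₀ h2 h1 3]
  · have hev : (fun y : ℝ => max y 0 ^ 3) =ᶠ[nhds x] fun y => y ^ 3 := by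
      filter_upwards [Ioi_mem_nhds h] with y hy
      simp [max_eq_left (le_of_lt (Set.mem_Ioi.mp hy))]
    have h0 : HasDerivAt (fun y : ℝ => y ^ 3) (3 * x ^ 2) x := by
      simpa using hasDerivAt_pow 3 x
    simpa [max_eq_left h.le] using h0.congr_of_eventuallyEq hev

lemma contDiff_maxsq : ContDiff ℝ 1 (fun y : ℝ => max y 0 ^ 2) := by
  rw [contDiff_one_iff_deriv]
  refine ⟨fun x => (hasDerivAt_maxsq x).differentiableAt, ?_⟩
  have : deriv (fun y : ℝ => max y 0 ^ 2) = fun x => 2 * max x 0 :=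
    funext fun x => (hasDerivAt_maxsq x).deriv
  rw [this]; fun_prop

lemma contDiff_maxcb : ContDiff ℝ 1 (fun y : ℝ => max y 0 ^ 3) := by
  rw [contDiff_one_iff_deriv]
  refine ⟨fun x => (hasDerivAt_maxcb x).differentiableAt, ?_⟩
  have : deriv (fun y : ℝ => max y 0 ^ 3) = fun x => 3 * max x 0 ^ 2 :=
    funext fun x => (hasDerivAt_maxcb x).deriv
  rw [this]; fun_prop

section decomp

variable {p q r : ℝ}

lemma dodd_eq (hpq : p < q) (hqr : q < r) : Dodd p q r = fun t =>
    (1 / ((r - q) ^ 2 * ((r - q) + (q - p)) ^ 2)) * (max (r - t) 0) ^ 3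
      + ((2 * (r - q) - (q - p)) / ((q - p) ^ 3 * (r - q) ^ 2)) * (max (q - t) 0) ^ 3
      + (-3 / ((q - p) ^ 2 * (r - q))) * (max (q - t) 0) ^ 2
      - (3 / ((q - p) ^ 2 * (r - p))) * (max (p - t) 0) ^ 2
      - ((2 * (r - q) + 3 * (q - p)) / ((q - p) ^ 3 * (r - p) ^ 2)) * (max (p - t) 0) ^ 3 := by
  have h1 : q - p ≠ 0 := by intro h; nlinarith
  have h2 : r - q ≠ 0 := by intro h; nlinarith
  have h3 : r - p ≠ 0 := by intro h; nlinarith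
  have h4 : (r - q) + (q - p) ≠ 0 := by intro h; nlinarith
  funext t
  unfold Dodd
  rcases le_or_gt p t with hp | hp
  · have m3 : max (p - t) 0 = 0 := max_eq_right (by linarith)
    rcases le_or_gt t r with hr | hr
    · rw [if_pos ⟨hp, hr⟩, m3]; ring
    · rw [if_neg (fun h => absurd h.2 (not_le.mpr hr))]
      have mr : max (r - t) 0 = 0 := max_eq_right (by linarith)
      have mq : max (q - t) 0 = 0 := max_eq_right (by linarith)
      rw [mr, mq, m3]; ring
  · rw [if_neg (fun h => absurd h.1 (not_le.mpr hp))]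
    have mr : max (r - t) 0 = r - t := max_eq_left (by linarith)
    have mq : max (q - t) 0 = q - t := max_eq_left (by linarith)
    have mp : max (p - t) 0 = p - t := max_eq_left (by linarith)
    rw [mr, mq, mp]
    field_simp
    ring

lemma deven_eq (hpq : p < q) (hqr : q < r) : Deven p q r = fun t =>
    ((-3 * (r - q) - 2 * (q - p)) / (((r - q) + (q - p)) ^ 2 * (r - q) ^ 3)) * (max (r - t) 0) ^ 3
      + (3 / (((r - q) + (q - p)) * (r - q) ^ 2)) * (max (r - t) 0) ^ 2
      + ((2 * (q - p) - (r - q)) / ((q - p) ^ 2 * (r - q) ^ 3)) * (max (q - t) 0) ^ 3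
      + (3 / ((q - p) * (r - q) ^ 2)) * (max (q - t) 0) ^ 2
      + (1 / ((q - p) ^ 2 * (r - p) ^ 2)) * (max (p - t) 0) ^ 3 := by
  have h1 : q - p ≠ 0 := by intro h; nlinarith
  have h2 : r - q ≠ 0 := by intro h; nlinarith
  have h3 : r - p ≠ 0 := by intro h; nlinarith
  have h4 : (r - q) + (q - p) ≠ 0 := by intro h; nlinarith
  funext t
  unfold Deven
  rcases le_or_gt p t with hp | hp
  · have m3 : max (p - t) 0 = 0 := max_eq_right (by linarith)
    rcases le_or_gt t r with hr | hr
    · rw [if_pos ⟨hp, hr⟩, m3]; ring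
    · rw [if_neg (fun h => absurd h.2 (not_le.mpr hr))]
      have mr : max (r - t) 0 = 0 := max_eq_right (by linarith)
      have mq : max (q - t) 0 = 0 := max_eq_right (by linarith)
      rw [mr, mq, m3]; ring
  · rw [if_neg (fun h => absurd h.1 (not_le.mpr hp))]
    have mr : max (r - t) 0 = r - t := max_eq_left (by linarith)
    have mq : max (q - t) 0 = q - t := max_eq_left (by linarith)
    have mp : max (p - t) 0 = p - t := max_eq_left (by linarith)
    rw [mr, mq, mp]
    field_simp
    ring

end decomp
set_option maxHeartbeats 2000000 in
/-- (i) `D_{2k-1} > 0` and `D_{2k} > 0` on the open support `(x_{k-2}, x_k)`; and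
(ii) the cubic expressions `P`, `R` defining `D_{2k-1}`, `D_{2k}` on `[x_{k-2}, x_k]` vanish
to first order at the left endpoint `x_{k-2}`, so that the extensions of `D_{2k-1}` and
`D_{2k}` by zero outside `[x_{k-2}, x_k]` are continuously differentiable on `ℝ`. -/
theorem stmt4 (p q r : ℝ) (hpq : p < q) (hqr : q < r) :
    (∀ t ∈ Set.Ioo p r, 0 < Dodd p q r t ∧ 0 < Deven p q r t) ∧
    (letI P : ℝ → ℝ := fun t =>
        (1 / ((r - q) ^ 2 * ((r - q) + (q - p)) ^ 2)) * (r - t) ^ 3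
          + ((2 * (r - q) - (q - p)) / ((q - p) ^ 3 * (r - q) ^ 2)) * (q - t) ^ 3
          + (-3 / ((q - p) ^ 2 * (r - q))) * (q - t) ^ 2
     letI R : ℝ → ℝ := fun t =>
        ((-3 * (r - q) - 2 * (q - p)) / (((r - q) + (q - p)) ^ 2 * (r - q) ^ 3)) * (r - t) ^ 3
          + (3 / (((r - q) + (q - p)) * (r - q) ^ 2)) * (r - t) ^ 2
          + ((2 * (q - p) - (r - q)) / ((q - p) ^ 2 * (r - q) ^ 3)) * (q - t) ^ 3
          + (3 / ((q - p) * (r - q) ^ 2)) * (q - t) ^ 2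
     P p = 0 ∧ deriv P p = 0 ∧ R p = 0 ∧ deriv R p = 0) ∧
    ContDiff ℝ 1 (Dodd p q r) ∧ ContDiff ℝ 1 (Deven p q r) := by
  have hqp0 : (0:ℝ) < q - p := by linarith
  have hrq0 : (0:ℝ) < r - q := by linarith
  have hrp0 : (0:ℝ) < r - p := by linarith
  have h1 : q - p ≠ 0 := ne_of_gt hqp0
  have h2 : r - q ≠ 0 := ne_of_gt hrq0
  have h3 : r - p ≠ 0 := ne_of_gt hrp0
  have h4 : (r - q) + (q - p) ≠ 0 := by positivity
  refine ⟨?_, ?_, ?_, ?_⟩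
  · -- positivity
    rintro t ⟨htp, htr⟩
    constructor
    · rw [Dodd, if_pos ⟨htp.le, htr.le⟩]
      have mr : max (r - t) 0 = r - t := max_eq_left (by linarith)
      rcases le_or_gt t q with htq | htq
      · have mq : max (q - t) 0 = q - t := max_eq_left (by linarith)
        rw [mr, mq]
        have key : (1 / ((r - q) ^ 2 * ((r - q) + (q - p)) ^ 2)) * (r - t) ^ 3
              + ((2 * (r - q) - (q - p)) / ((q - p) ^ 3 * (r - q) ^ 2)) * (q - t) ^ 3
              + (-3 / ((q - p) ^ 2 * (r - q))) * (q - t) ^ 2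
            = (t - p) ^ 2 * ((3 * (q - p) * (r - p) - (2 * (r - q) + 3 * (q - p)) * (t - p))
                / ((q - p) ^ 3 * (r - p) ^ 2)) := by
          field_simp
          ring
        rw [key]
        apply mul_pos (pow_pos (by linarith) 2)
        apply div_pos ?_ (by positivity)
        nlinarith [mul_pos hqp0 hrq0,
          mul_le_mul_of_nonneg_right (show t - p ≤ q - p by linarith)
            (show (0:ℝ) ≤ 2 * (r - q) + 3 * (q - p) by linarith)]
      · have mq : max (q - t) 0 = 0 := max_eq_right (by linarith)
        rw [mr, mq]
        have key : (1 / ((r - q) ^ 2 * ((r - q) + (q - p)) ^ 2)) * (r - t) ^ 3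
              + ((2 * (r - q) - (q - p)) / ((q - p) ^ 3 * (r - q) ^ 2)) * (0:ℝ) ^ 3
              + (-3 / ((q - p) ^ 2 * (r - q))) * (0:ℝ) ^ 2
            = (r - t) ^ 3 / ((r - q) ^ 2 * ((r - q) + (q - p)) ^ 2) := by ring
        rw [key]
        exact div_pos (pow_pos (by linarith) 3)
          (mul_pos (pow_pos hrq0 2) (pow_pos (by linarith) 2))
    · rw [Deven, if_pos ⟨htp.le, htr.le⟩]
      have mr : max (r - t) 0 = r - t := max_eq_left (by linarith)
      rcases le_or_gt t q with htq | htq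
      · have mq : max (q - t) 0 = q - t := max_eq_left (by linarith)
        rw [mr, mq]
        have key : ((-3 * (r - q) - 2 * (q - p)) / (((r - q) + (q - p)) ^ 2 * (r - q) ^ 3)) * (r - t) ^ 3
              + (3 / (((r - q) + (q - p)) * (r - q) ^ 2)) * (r - t) ^ 2
              + ((2 * (q - p) - (r - q)) / ((q - p) ^ 2 * (r - q) ^ 3)) * (q - t) ^ 3
              + (3 / ((q - p) * (r - q) ^ 2)) * (q - t) ^ 2
            = (t - p) ^ 3 / ((q - p) ^ 2 * (r - p) ^ 2) := by
          field_simp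
          ring
        rw [key]
        exact div_pos (pow_pos (by linarith) 3)
          (mul_pos (pow_pos hqp0 2) (pow_pos hrp0 2))
      · have mq : max (q - t) 0 = 0 := max_eq_right (by linarith)
        rw [mr, mq]
        have key : ((-3 * (r - q) - 2 * (q - p)) / (((r - q) + (q - p)) ^ 2 * (r - q) ^ 3)) * (r - t) ^ 3
              + (3 / (((r - q) + (q - p)) * (r - q) ^ 2)) * (r - t) ^ 2
              + ((2 * (q - p) - (r - q)) / ((q - p) ^ 2 * (r - q) ^ 3)) * (0:ℝ) ^ 3
              + (3 / ((q - p) * (r - q) ^ 2)) * (0:ℝ) ^ 2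
            = (r - t) ^ 2 * ((3 * (r - p) * (r - q) - (3 * (r - q) + 2 * (q - p)) * (r - t))
                / ((r - p) ^ 2 * (r - q) ^ 3)) := by
          field_simp
          ring
        rw [key]
        apply mul_pos (pow_pos (by linarith) 2)
        apply div_pos ?_ (by positivity)
        nlinarith [mul_pos hrq0 hqp0,
          mul_lt_mul_of_pos_right (show r - t < r - q by linarith)
            (show (0:ℝ) < 3 * (r - q) + 2 * (q - p) by linarith)]
  · -- vanishing to first order at p
    have dsub : ∀ c : ℝ, HasDerivAt (fun t : ℝ => c - t) (-1) p := fun c => by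
      simpa using (hasDerivAt_id p).const_sub c
    have d3 : ∀ c : ℝ, HasDerivAt (fun t : ℝ => (c - t) ^ 3) (3 * (c - p) ^ 2 * (-1)) p :=
      fun c => by simpa using (dsub c).fun_pow 3
    have d2 : ∀ c : ℝ, HasDerivAt (fun t : ℝ => (c - t) ^ 2) (2 * (c - p) ^ 1 * (-1)) p :=
      fun c => by simpa using (dsub c).fun_pow 2
    refine ⟨?_, ?_, ?_, ?_⟩
    · show (1 / ((r - q) ^ 2 * ((r - q) + (q - p)) ^ 2)) * (r - p) ^ 3
          + ((2 * (r - q) - (q - p)) / ((q - p) ^ 3 * (r - q) ^ 2)) * (q - p) ^ 3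
          + (-3 / ((q - p) ^ 2 * (r - q))) * (q - p) ^ 2 = 0
      field_simp
      ring
    · have hP : HasDerivAt (fun t : ℝ =>
          (1 / ((r - q) ^ 2 * ((r - q) + (q - p)) ^ 2)) * (r - t) ^ 3
            + ((2 * (r - q) - (q - p)) / ((q - p) ^ 3 * (r - q) ^ 2)) * (q - t) ^ 3
            + (-3 / ((q - p) ^ 2 * (r - q))) * (q - t) ^ 2)
          ((1 / ((r - q) ^ 2 * ((r - q) + (q - p)) ^ 2)) * (3 * (r - p) ^ 2 * (-1))
            + ((2 * (r - q) - (q - p)) / ((q - p) ^ 3 * (r - q) ^ 2)) * (3 * (q - p) ^ 2 * (-1))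
            + (-3 / ((q - p) ^ 2 * (r - q))) * (2 * (q - p) ^ 1 * (-1))) p :=
        (((d3 r).const_mul _).add ((d3 q).const_mul _)).add ((d2 q).const_mul _)
      rw [hP.deriv]
      field_simp
      ring
    · show ((-3 * (r - q) - 2 * (q - p)) / (((r - q) + (q - p)) ^ 2 * (r - q) ^ 3)) * (r - p) ^ 3
          + (3 / (((r - q) + (q - p)) * (r - q) ^ 2)) * (r - p) ^ 2
          + ((2 * (q - p) - (r - q)) / ((q - p) ^ 2 * (r - q) ^ 3)) * (q - p) ^ 3
          + (3 / ((q - p) * (r - q) ^ 2)) * (q - p) ^ 2 = 0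
      field_simp
      ring
    · have hR : HasDerivAt (fun t : ℝ =>
          ((-3 * (r - q) - 2 * (q - p)) / (((r - q) + (q - p)) ^ 2 * (r - q) ^ 3)) * (r - t) ^ 3
            + (3 / (((r - q) + (q - p)) * (r - q) ^ 2)) * (r - t) ^ 2
            + ((2 * (q - p) - (r - q)) / ((q - p) ^ 2 * (r - q) ^ 3)) * (q - t) ^ 3
            + (3 / ((q - p) * (r - q) ^ 2)) * (q - t) ^ 2)
          (((-3 * (r - q) - 2 * (q - p)) / (((r - q) + (q - p)) ^ 2 * (r - q) ^ 3)) * (3 * (r - p) ^ 2 * (-1))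
            + (3 / (((r - q) + (q - p)) * (r - q) ^ 2)) * (2 * (r - p) ^ 1 * (-1))
            + ((2 * (q - p) - (r - q)) / ((q - p) ^ 2 * (r - q) ^ 3)) * (3 * (q - p) ^ 2 * (-1))
            + (3 / ((q - p) * (r - q) ^ 2)) * (2 * (q - p) ^ 1 * (-1))) p :=
        ((((d3 r).const_mul _).add ((d2 r).const_mul _)).add ((d3 q).const_mul _)).add
          ((d2 q).const_mul _)
      rw [hR.deriv]
      field_simp
      ring
  · -- ContDiff Dodd
    rw [dodd_eq hpq hqr]
    have c3 : ∀ c : ℝ, ContDiff ℝ 1 (fun t : ℝ => max (c - t) 0 ^ 3) := fun c =>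
      contDiff_maxcb.comp (contDiff_const.sub contDiff_id)
    have c2 : ∀ c : ℝ, ContDiff ℝ 1 (fun t : ℝ => max (c - t) 0 ^ 2) := fun c =>
      contDiff_maxsq.comp (contDiff_const.sub contDiff_id)
    exact ((((contDiff_const.mul (c3 r)).add (contDiff_const.mul (c3 q))).add (contDiff_const.mul (c2 q))).sub
      (contDiff_const.mul (c2 p))).sub (contDiff_const.mul (c3 p))
  · -- ContDiff Deven
    rw [deven_eq hpq hqr]
    have c3 : ∀ c : ℝ, ContDiff ℝ 1 (fun t : ℝ => max (c - t) 0 ^ 3) := fun c =>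
      contDiff_maxcb.comp (contDiff_const.sub contDiff_id)
    have c2 : ∀ c : ℝ, ContDiff ℝ 1 (fun t : ℝ => max (c - t) 0 ^ 2) := fun c =>
      contDiff_maxsq.comp (contDiff_const.sub contDiff_id)
    exact (((((contDiff_const.mul (c3 r)).add (contDiff_const.mul (c2 r))).add (contDiff_const.mul (c3 q))).add
      (contDiff_const.mul (c2 q))).add (contDiff_const.mul (c3 p)))
end

section
/- For every integer N ≥ 2, the sequence x_0 = -1, x_k = -cos((2k-1)π/(2N)) for k = 1, ..., N (the roots of the degree-N Chebyshev polynomial of the first kind), and x_{N+1} = 1 is a symmetrically stretched knot sequence on [-1, 1]: the x_k are strictly increasing, x_k + x_{N+1-k} = 0 for all k = 0, ..., N+1, and x_k - 2 x_{k+1} + x_{k+2} ≥ 0 for k = 0, ..., ⌊(N+1)/2⌋ - 1. -/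
/-- The knot sequence built from the roots of the degree-`N` Chebyshev polynomial of the
first kind, together with the endpoints `±1`, is a symmetrically stretched knot sequence
on `[-1, 1]`: it is strictly increasing, symmetric about `0`, and satisfies the stretching
condition `x_k - 2x_{k+1} + x_{k+2} ≥ 0` for `k = 0, …, ⌊(N+1)/2⌋ - 1`. -/
theorem stmt15 (N : ℕ) (hN : 2 ≤ N) (x : ℕ → ℝ)
    (hx0 : x 0 = -1)
    (hxk : ∀ k, 1 ≤ k → k ≤ N → x k = -Real.cos ((2 * (k : ℝ) - 1) * Real.pi / (2 * N)))
    (hxN1 : x (N + 1) = 1) :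
    (∀ k, k ≤ N → x k < x (k + 1)) ∧
    (∀ k, k ≤ N + 1 → x k + x (N + 1 - k) = 0) ∧
    (∀ k, k < (N + 1) / 2 → x k - 2 * x (k + 1) + x (k + 2) ≥ 0) := by
  have hπ := Real.pi_pos
  have hNR : (2:ℝ) ≤ N := by exact_mod_cast hN
  have hN0 : (0:ℝ) < N := by linarith
  have hθpos : ∀ k : ℕ, 1 ≤ k → 0 < (2 * (k:ℝ) - 1) * Real.pi / (2 * N) := by
    intro k hk
    have h1 : (1:ℝ) ≤ k := by exact_mod_cast hk
    apply div_pos (mul_pos (by linarith) hπ) (by linarith)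
  have hθlt : ∀ k : ℕ, k ≤ N → (2 * (k:ℝ) - 1) * Real.pi / (2 * N) < Real.pi := by
    intro k hk
    have h1 : (k:ℝ) ≤ N := by exact_mod_cast hk
    rw [div_lt_iff₀ (by linarith)]
    nlinarith
  refine ⟨?_, ?_, ?_⟩
  · -- strict monotonicity
    intro k hk
    rcases Nat.eq_zero_or_pos k with rfl | hk1
    · rw [hx0, hxk 1 le_rfl (by omega)]
      have h1 : Real.cos ((2 * ((1:ℕ):ℝ) - 1) * Real.pi / (2 * N)) < Real.cos 0 :=
        Real.cos_lt_cos_of_nonneg_of_le_pi le_rfl (le_of_lt (hθlt 1 (by omega)))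
          (hθpos 1 le_rfl)
      rw [Real.cos_zero] at h1
      linarith
    rcases eq_or_lt_of_le hk with heq | hkN
    · rw [heq, hxN1, hxk N (by omega) le_rfl]
      have h1 : Real.cos Real.pi < Real.cos ((2 * (N:ℝ) - 1) * Real.pi / (2 * N)) :=
        Real.cos_lt_cos_of_nonneg_of_le_pi (le_of_lt (hθpos N (by omega))) le_rfl (hθlt N le_rfl)
      rw [Real.cos_pi] at h1
      linarith
    · have hk1N : k + 1 ≤ N := hkN
      rw [hxk k hk1 (by omega), hxk (k+1) (by omega) hk1N]
      have h1 : Real.cos ((2 * ((k+1:ℕ):ℝ) - 1) * Real.pi / (2 * N)) <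
          Real.cos ((2 * (k:ℝ) - 1) * Real.pi / (2 * N)) := by
        apply Real.cos_lt_cos_of_nonneg_of_le_pi (le_of_lt (hθpos k hk1))
          (le_of_lt (hθlt (k+1) hk1N))
        have : ((k+1:ℕ):ℝ) = (k:ℝ) + 1 := by push_cast; ring
        rw [this, div_lt_div_iff₀ (by linarith) (by linarith)]
        nlinarith
      linarith
  · -- symmetry
    intro k hk
    rcases Nat.eq_zero_or_pos k with rfl | hk1
    · simp only [Nat.sub_zero, hx0, hxN1]; ring
    rcases eq_or_lt_of_le hk with heq | hkN
    · rw [heq]; simp only [Nat.sub_self, hx0, hxN1]; ring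
    have hkN' : k ≤ N := by omega
    rw [hxk k hk1 hkN', hxk (N+1-k) (by omega) (by omega)]
    have hc : ((N+1-k:ℕ):ℝ) = (N:ℝ) + 1 - k := by
      rw [Nat.cast_sub (by omega)]; push_cast; ring
    have harg : (2 * ((N+1-k:ℕ):ℝ) - 1) * Real.pi / (2 * N) =
        Real.pi - (2 * (k:ℝ) - 1) * Real.pi / (2 * N) := by
      rw [hc]; field_simp; ring
    rw [harg, Real.cos_pi_sub]
    ring
  · -- stretching condition
    intro k hk
    have h2k : 2 * k + 1 ≤ N := by omega
    rcases Nat.eq_zero_or_pos k with rfl | hk1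
    · rw [hx0, hxk 1 (by omega) (by omega), hxk 2 (by omega) (by omega)]
      set a := Real.pi / (2 * N) with ha
      have e1 : (2 * ((1:ℕ):ℝ) - 1) * Real.pi / (2 * N) = a := by rw [ha]; push_cast; ring
      have e2 : (2 * ((2:ℕ):ℝ) - 1) * Real.pi / (2 * N) = 3 * a := by rw [ha]; push_cast; ring
      rw [e1, e2, Real.cos_three_mul]
      have hc1 : Real.cos a ≤ 1 := Real.cos_le_one a
      have ha0 : 0 ≤ a := by positivity
      have haπ3 : a ≤ Real.pi / 3 := by
        rw [ha, div_le_div_iff₀ (by linarith) (by norm_num)]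
        nlinarith
      have hc2 : 1/2 ≤ Real.cos a := by
        have := Real.cos_le_cos_of_nonneg_of_le_pi ha0 (by linarith) haπ3
        rw [Real.cos_pi_div_three] at this
        linarith
      nlinarith [mul_nonneg (sub_nonneg.2 hc1)
        (by nlinarith : (0:ℝ) ≤ 4 * Real.cos a ^ 2 + 4 * Real.cos a - 1)]
    · have hk2N : k + 2 ≤ N := by omega
      rw [hxk k hk1 (by omega), hxk (k+1) (by omega) (by omega), hxk (k+2) (by omega) hk2N]
      set a := (2 * (k:ℝ) + 1) * Real.pi / (2 * N) with ha
      set d := Real.pi / N with hd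
      have e1 : (2 * ((k:ℕ):ℝ) - 1) * Real.pi / (2 * N) = a - d := by
        rw [ha, hd]; field_simp; ring
      have e2 : (2 * ((k+1:ℕ):ℝ) - 1) * Real.pi / (2 * N) = a := by
        rw [ha]; push_cast; ring
      have e3 : (2 * ((k+2:ℕ):ℝ) - 1) * Real.pi / (2 * N) = a + d := by
        rw [ha, hd]; push_cast; field_simp; ring
      rw [e1, e2, e3, Real.cos_sub, Real.cos_add]
      have hcosa : 0 ≤ Real.cos a := by
        apply Real.cos_nonneg_of_mem_Icc
        constructor
        · have : 0 < a := by
            rw [ha]; apply div_pos (mul_pos (by positivity) hπ) (by linarith)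
          linarith
        · rw [ha, div_le_div_iff₀ (by linarith) (by norm_num)]
          have h2kR : 2 * (k:ℝ) + 1 ≤ N := by exact_mod_cast h2k
          nlinarith
      have hcd : Real.cos d ≤ 1 := Real.cos_le_one d
      nlinarith [mul_nonneg hcosa (sub_nonneg.2 hcd)]
end
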